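/- arXiv:1604.07656 — 2 statements merged into one kernel-verified Lean document; each statement's English description precedes it below -/
import Mathlib

section
/- Let N be a proper submodule of an R-module M and k > n. Then N is a (k,n)-closed submodule of M if and only if N is a semi n-absorbing submodule of M. -/
/-!
Multiplying by `r ^ (k' - k)` shows that being `(k, n)`-closed only gets weaker as `k` grows.
Conversely, if `N` is semi `n`-absorbing and `r ^ (k + 1) • m ∈ N` with `k ≥ n`, then absorption
applied to `r ^ (k + 1 - n) • m` gives either `r ^ n ∈ (N :ᵣ M)` or `r ^ k • m ∈ N`, so the
exponent drops by one; induction brings it down to `n`.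
-/

namespace Submodule

variable {R M : Type*} [CommRing R] [AddCommGroup M] [Module R M]

/-- Semi `n`-absorbing is the case `IsKNClosed N n n`. -/
def IsKNClosed (N : Submodule R M) (k n : ℕ) : Prop :=
  ∀ (r : R) (m : M), r ^ k • m ∈ N → (∀ x : M, r ^ n • x ∈ N) ∨ r ^ (n - 1) • m ∈ N

variable {N : Submodule R M} {k n : ℕ}

theorem IsKNClosed.of_le {k' : ℕ} (h : N.IsKNClosed k' n) (hk : k ≤ k') : N.IsKNClosed k n := by
  intro r m hm
  apply h r m
  rw [← Nat.sub_add_cancel hk, pow_add, mul_smul]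
  exact N.smul_mem _ hm

theorem IsKNClosed.succ (hsemi : N.IsKNClosed n n) (hn : 0 < n) (hk : n ≤ k)
    (h : N.IsKNClosed k n) : N.IsKNClosed (k + 1) n := by
  intro r m hm
  have hfactor : r ^ n • (r ^ (k + 1 - n) • m) ∈ N := by
    rwa [smul_smul, ← pow_add, Nat.add_sub_cancel' (by omega)]
  rcases hsemi r _ hfactor with hcolon | hlower
  · exact Or.inl hcolon
  · apply h r m
    rwa [smul_smul, ← pow_add, show n - 1 + (k + 1 - n) = k by omega] at hlower

theorem IsKNClosed.of_semi (hsemi : N.IsKNClosed n n) (hn : 0 < n) (hk : n ≤ k) :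
    N.IsKNClosed k n := by
  induction k, hk using Nat.le_induction with
  | base => exact hsemi
  | succ k hk ih => exact hsemi.succ hn hk ih

theorem isKNClosed_iff_isKNClosed_self (hn : 0 < n) (hk : n ≤ k) :
    N.IsKNClosed k n ↔ N.IsKNClosed n n :=
  ⟨fun h => h.of_le hk, fun h => h.of_semi hn hk⟩

end Submodule

theorem stmt_12_general {R M : Type*} [CommRing R] [AddCommGroup M] [Module R M]
    (k n : ℕ) (hn : 0 < n) (hkn : k > n) (N : Submodule R M) :
    (∀ (r : R) (m : M), r ^ k • m ∈ N →
        (∀ x : M, r ^ n • x ∈ N) ∨ r ^ (n - 1) • m ∈ N) ↔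
    (∀ (r : R) (m : M), r ^ n • m ∈ N →
        (∀ x : M, r ^ n • x ∈ N) ∨ r ^ (n - 1) • m ∈ N) :=
  Submodule.isKNClosed_iff_isKNClosed_self hn hkn.le

/-- For k > n, N is (k,n)-closed iff N is semi n-absorbing. -/
theorem stmt_12 {R M : Type*} [CommRing R] [Nontrivial R] [AddCommGroup M] [Module R M]
    (k n : ℕ) (hn : 0 < n) (hkn : k > n) (N : Submodule R M) (hN : N ≠ ⊤) :
    (∀ (r : R) (m : M), r ^ k • m ∈ N →
        (∀ x : M, r ^ n • x ∈ N) ∨ r ^ (n - 1) • m ∈ N) ↔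
    (∀ (r : R) (m : M), r ^ n • m ∈ N →
        (∀ x : M, r ^ n • x ∈ N) ∨ r ^ (n - 1) • m ∈ N) :=
  stmt_12_general k n hn hkn N
end

section
/- In the ℤ-module ℤ with distinct primes p and q, the submodules p^n ℤ and q^n ℤ are semi n-absorbing, but their intersection p^n q^n ℤ is not semi n-absorbing (witnessed by p^n · q^n ∈ p^n q^n ℤ while p^(n-1)·q^n ∉ p^n q^n ℤ and p^n ∉ (p^n q^n ℤ :ℤ ℤ)). -/
/-!
If `p` is prime and `p ∣ r`, then `r ^ n` kills `R ⧸ (p ^ k)` as soon as `k ≤ n`; if `p ∤ r`, then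
`p ^ k ∣ r ^ n * m` forces `p ^ k ∣ m`. Hence `(p ^ k)` is semi `n`-absorbing. For `(p ^ n * q ^ n)` the
pair `r = p`, `m = q ^ n` fails: `p ^ n * q ^ n` lies in the ideal, but dropping one factor `p` leaves it,
and `p ^ n` does not annihilate `1` modulo the ideal since `q` is not a unit.
-/

/-- The clause `∀ x, r ^ n • x ∈ N` encodes `r ^ n ∈ (N :ᵣ M)`. -/
def Submodule.IsSemiAbsorbing {R M : Type*} [CommSemiring R] [AddCommMonoid M] [Module R M]
    (n : ℕ) (N : Submodule R M) : Prop :=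
  ∀ (r : R) (m : M), r ^ n • m ∈ N → (∀ x : M, r ^ n • x ∈ N) ∨ r ^ (n - 1) • m ∈ N

section

variable {R : Type*} [CommRing R] [IsDomain R]

theorem Ideal.isSemiAbsorbing_span_prime_pow {p : R} (hp : Prime p) {k n : ℕ} (hkn : k ≤ n) :
    Submodule.IsSemiAbsorbing n (Ideal.span {p ^ k}) := by
  intro r m h
  simp only [smul_eq_mul, Ideal.mem_span_singleton] at h ⊢
  by_cases hpr : p ∣ r
  · exact Or.inl fun x => ((pow_dvd_pow p hkn).trans (pow_dvd_pow_of_dvd hpr n)).mul_right x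
  · exact Or.inr ((hp.pow_dvd_of_dvd_mul_left k (fun h => hpr (hp.dvd_of_dvd_pow h)) h).mul_left _)

theorem not_pow_mul_dvd_pow_pred_mul {p b : R} (hp : Prime p) (hb : b ≠ 0) {n : ℕ} (hn : 0 < n) :
    ¬ p ^ n * b ∣ p ^ (n - 1) * b := by
  rw [mul_dvd_mul_iff_right hb, pow_dvd_pow_iff hp.ne_zero hp.not_isUnit]
  omega

theorem not_mul_dvd_self_of_not_isUnit {a b : R} (ha : a ≠ 0) (hb : ¬ IsUnit b) : ¬ a * b ∣ a := by
  intro h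
  rw [← mul_one a, mul_assoc, one_mul, mul_dvd_mul_iff_left ha] at h
  exact hb (isUnit_of_dvd_one h)

theorem not_forall_pow_smul_mem_span_pow_mul_pow {p q : R} (hp : p ≠ 0) (hq : ¬ IsUnit q) {n : ℕ}
    (hn : n ≠ 0) : ¬ ∀ x : R, p ^ n • x ∈ Ideal.span {p ^ n * q ^ n} := by
  intro h
  have h1 := h 1
  rw [smul_eq_mul, mul_one, Ideal.mem_span_singleton] at h1
  exact not_mul_dvd_self_of_not_isUnit (pow_ne_zero n hp) (mt (isUnit_pow_iff hn).mp hq) h1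

theorem pow_pred_smul_pow_notMem_span_pow_mul_pow {p q : R} (hp : Prime p) (hq : q ≠ 0) {n : ℕ}
    (hn : 0 < n) : p ^ (n - 1) • q ^ n ∉ Ideal.span {p ^ n * q ^ n} := by
  rw [smul_eq_mul, Ideal.mem_span_singleton]
  exact not_pow_mul_dvd_pow_pred_mul hp (pow_ne_zero n hq) hn

theorem Ideal.not_isSemiAbsorbing_span_pow_mul_pow {p q : R} (hp : Prime p) (hq₀ : q ≠ 0)
    (hq : ¬ IsUnit q) {n : ℕ} (hn : 0 < n) :
    ¬ Submodule.IsSemiAbsorbing n (Ideal.span {p ^ n * q ^ n}) := by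
  intro h
  rcases h p (q ^ n) (by rw [smul_eq_mul]; exact Ideal.mem_span_singleton_self _) with h1 | h1
  · exact not_forall_pow_smul_mem_span_pow_mul_pow hp.ne_zero hq hn.ne' h1
  · exact pow_pred_smul_pow_notMem_span_pow_mul_pow hp hq₀ hn h1

end

theorem stmt_15_general (p q : ℤ) (hp : Prime p) (hq : Prime q)
    (n : ℕ) (hn : 0 < n) :
    (∀ (r m : ℤ), r ^ n • m ∈ Ideal.span ({p ^ n} : Set ℤ) →
        (∀ x : ℤ, r ^ n • x ∈ Ideal.span ({p ^ n} : Set ℤ)) ∨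
          r ^ (n - 1) • m ∈ Ideal.span ({p ^ n} : Set ℤ)) ∧
    (∀ (r m : ℤ), r ^ n • m ∈ Ideal.span ({q ^ n} : Set ℤ) →
        (∀ x : ℤ, r ^ n • x ∈ Ideal.span ({q ^ n} : Set ℤ)) ∨
          r ^ (n - 1) • m ∈ Ideal.span ({q ^ n} : Set ℤ)) ∧
    ¬ (∀ (r m : ℤ), r ^ n • m ∈ Ideal.span ({p ^ n * q ^ n} : Set ℤ) →
        (∀ x : ℤ, r ^ n • x ∈ Ideal.span ({p ^ n * q ^ n} : Set ℤ)) ∨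
          r ^ (n - 1) • m ∈ Ideal.span ({p ^ n * q ^ n} : Set ℤ)) ∧
    p ^ n • q ^ n ∈ Ideal.span ({p ^ n * q ^ n} : Set ℤ) ∧
    p ^ (n - 1) • q ^ n ∉ Ideal.span ({p ^ n * q ^ n} : Set ℤ) ∧
    ¬ (∀ x : ℤ, p ^ n • x ∈ Ideal.span ({p ^ n * q ^ n} : Set ℤ)) :=
  ⟨Ideal.isSemiAbsorbing_span_prime_pow hp le_rfl,
    Ideal.isSemiAbsorbing_span_prime_pow hq le_rfl,
    Ideal.not_isSemiAbsorbing_span_pow_mul_pow hp hq.ne_zero hq.not_isUnit hn,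
    Ideal.mem_span_singleton_self _,
    pow_pred_smul_pow_notMem_span_pow_mul_pow hp hq.ne_zero hn,
    not_forall_pow_smul_mem_span_pow_mul_pow hp.ne_zero hq.not_isUnit hn.ne'⟩

/-- For distinct primes p, q, the submodules p^nℤ and q^nℤ of the
ℤ-module ℤ are semi n-absorbing, but p^n q^n ℤ is not. -/
theorem stmt_15 (p q : ℤ) (hp : Prime p) (hq : Prime q) (hpq : p ≠ q)
    (n : ℕ) (hn : 0 < n) :
    (∀ (r m : ℤ), r ^ n • m ∈ Ideal.span ({p ^ n} : Set ℤ) →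
        (∀ x : ℤ, r ^ n • x ∈ Ideal.span ({p ^ n} : Set ℤ)) ∨
          r ^ (n - 1) • m ∈ Ideal.span ({p ^ n} : Set ℤ)) ∧
    (∀ (r m : ℤ), r ^ n • m ∈ Ideal.span ({q ^ n} : Set ℤ) →
        (∀ x : ℤ, r ^ n • x ∈ Ideal.span ({q ^ n} : Set ℤ)) ∨
          r ^ (n - 1) • m ∈ Ideal.span ({q ^ n} : Set ℤ)) ∧
    ¬ (∀ (r m : ℤ), r ^ n • m ∈ Ideal.span ({p ^ n * q ^ n} : Set ℤ) →
        (∀ x : ℤ, r ^ n • x ∈ Ideal.span ({p ^ n * q ^ n} : Set ℤ)) ∨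
          r ^ (n - 1) • m ∈ Ideal.span ({p ^ n * q ^ n} : Set ℤ)) ∧
    p ^ n • q ^ n ∈ Ideal.span ({p ^ n * q ^ n} : Set ℤ) ∧
    p ^ (n - 1) • q ^ n ∉ Ideal.span ({p ^ n * q ^ n} : Set ℤ) ∧
    ¬ (∀ x : ℤ, p ^ n • x ∈ Ideal.span ({p ^ n * q ^ n} : Set ℤ)) :=
  stmt_15_general p q hp hq n hn
end
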